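/- arXiv:1803.07836 — 3 statements merged into one kernel-verified Lean document; each statement's English description precedes it below -/
import Mathlib

section
/- (Lemma 1, part (b)) Let z : ℕ → ℝ be a nonnegative sequence and r_1, r_2 : ℕ → ℝ deterministic sequences satisfying z(k+1) ≤ (1 − r_1(k)) z(k) + r_2(k) for all k, with a_1/(k+1)^{1/2} ≤ r_1(k) ≤ 1 and 0 ≤ r_2(k) ≤ a_2/(k+1)^{3/2} for all k, where a_1, a_2 > 0. Then z(k) = O(1/k), i.e., lim sup_{k→∞} k · z(k) < ∞. -/
/-- Key algebraic inequality for the inductive step. -/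
lemma seq_lemma_b_key (a1 a2 M s : ℝ) (ha1 : 0 < a1) (ha2 : 0 ≤ a2)
    (hM : 2 * a2 ≤ a1 * M) (hM0 : 0 ≤ M) (hs : 2 / a1 ≤ s) (hs1 : 1 ≤ s) :
    (1 - a1 / s) * (M / s ^ 2) + a2 / s ^ 3 ≤ M / (s ^ 2 + 1) := by
  have hs0 : (0:ℝ) < s := lt_of_lt_of_le one_pos hs1
  have hsa : 2 ≤ a1 * s := by
    rw [div_le_iff₀ ha1] at hs; linarith [mul_comm s a1]
  have hL : (1 - a1 / s) * (M / s ^ 2) + a2 / s ^ 3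
      = (s * M - a1 * M + a2) / s ^ 3 := by
    field_simp
  rw [hL, div_le_div_iff₀ (by positivity) (by positivity)]
  nlinarith [mul_nonneg (mul_nonneg (sub_nonneg.2 hsa) hM0) (mul_pos hs0 hs0).le,
    mul_nonneg (sub_nonneg.2 hM) (mul_pos hs0 hs0).le,
    mul_nonneg (sub_nonneg.2 hM) hs0.le, sub_nonneg.2 hM,
    mul_pos hs0 hs0]

/-- Lemma 1(b): if `z(k+1) ≤ (1 − r₁(k)) z(k) + r₂(k)` with
`a₁/(k+1)^{1/2} ≤ r₁(k) ≤ 1` and `0 ≤ r₂(k) ≤ a₂/(k+1)^{3/2}`, `a₁, a₂ > 0`,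
then `z(k) = O(1/k)`. -/
theorem seq_lemma_b
    (z r1 r2 : ℕ → ℝ) (a1 a2 : ℝ) (ha1 : 0 < a1) (ha2 : 0 < a2)
    (hz : ∀ k : ℕ, 0 ≤ z k)
    (hrec : ∀ k : ℕ, z (k + 1) ≤ (1 - r1 k) * z k + r2 k)
    (hr1 : ∀ k : ℕ, a1 / ((k : ℝ) + 1) ^ (1/2 : ℝ) ≤ r1 k ∧ r1 k ≤ 1)
    (hr2 : ∀ k : ℕ, 0 ≤ r2 k ∧ r2 k ≤ a2 / ((k : ℝ) + 1) ^ (3/2 : ℝ)) :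
    ∃ C : ℝ, ∀ k : ℕ, (k : ℝ) * z k ≤ C := by
  set K : ℕ := ⌈(2 / a1) ^ 2⌉₊ with hK
  set M : ℝ := max (2 * a2 / a1) (((K : ℝ) + 1) * z K) with hMdef
  have hM1 : 2 * a2 / a1 ≤ M := le_max_left _ _
  have hM2 : ((K : ℝ) + 1) * z K ≤ M := le_max_right _ _
  have hM0 : 0 ≤ M := le_trans (by positivity) hM1
  have hMa : 2 * a2 ≤ a1 * M := by
    rw [div_le_iff₀ ha1] at hM1; linarith [mul_comm M a1]
  -- induction: z (K + n) ≤ M / (K + n + 1)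
  have hind : ∀ n : ℕ, z (K + n) ≤ M / ((K : ℝ) + n + 1) := by
    intro n
    induction n with
    | zero =>
      simp only [Nat.cast_zero, add_zero, Nat.add_zero]
      rw [le_div_iff₀ (by positivity)]
      linarith [hM2]
    | succ n ih =>
      set m : ℕ := K + n with hm
      have ht0 : (0:ℝ) ≤ (m : ℝ) + 1 := by positivity
      set s : ℝ := Real.sqrt ((m : ℝ) + 1) with hsdef
      have hs2 : s ^ 2 = (m : ℝ) + 1 := Real.sq_sqrt ht0
      have hs1 : 1 ≤ s := by
        rw [show (1:ℝ) = Real.sqrt 1 by simp]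
        exact Real.sqrt_le_sqrt (by linarith [Nat.cast_nonneg (α := ℝ) m])
      have hs0 : 0 < s := lt_of_lt_of_le one_pos hs1
      have hsK : 2 / a1 ≤ s := by
        have h1 : ((2 / a1) ^ 2 : ℝ) ≤ (K : ℝ) := Nat.le_ceil _
        have h2 : (K : ℝ) ≤ (m : ℝ) + 1 := by
          have : (K : ℝ) ≤ (m : ℝ) := by exact_mod_cast Nat.le_add_right K n
          linarith
        have := Real.sqrt_le_sqrt (le_trans h1 h2)
        rwa [Real.sqrt_sq (by positivity)] at this
      have hrpow_half : ((m : ℝ) + 1) ^ (1/2 : ℝ) = s := (Real.sqrt_eq_rpow _).symm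
      have hrpow_32 : ((m : ℝ) + 1) ^ (3/2 : ℝ) = s ^ 3 := by
        rw [show (3/2 : ℝ) = (1/2 : ℝ) * (3 : ℕ) by norm_num,
          Real.rpow_mul ht0, Real.rpow_natCast, hrpow_half]
      have hzm : z m ≤ M / s ^ 2 := by rw [hs2]; exact_mod_cast ih
      have hr1m := hr1 m
      have hr2m := hr2 m
      have h1r : 0 ≤ 1 - r1 m := by linarith [hr1m.2]
      have hstep : z (m + 1) ≤ (1 - a1 / s) * (M / s ^ 2) + a2 / s ^ 3 := by
        calc z (m + 1) ≤ (1 - r1 m) * z m + r2 m := hrec m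
          _ ≤ (1 - r1 m) * (M / s ^ 2) + a2 / s ^ 3 := by
              have := hr2m.2
              rw [hrpow_32] at this
              exact add_le_add (mul_le_mul_of_nonneg_left hzm h1r) this
          _ ≤ (1 - a1 / s) * (M / s ^ 2) + a2 / s ^ 3 := by
              have := hr1m.1
              rw [hrpow_half] at this
              have hMs : 0 ≤ M / s ^ 2 := by positivity
              nlinarith
      have hkey := seq_lemma_b_key a1 a2 M s ha1 ha2.le hMa hM0 hsK hs1
      have : z (m + 1) ≤ M / (s ^ 2 + 1) := le_trans hstep hkey
      rw [hs2] at this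
      have heq : (K : ℝ) + (n + 1 : ℕ) + 1 = (m : ℝ) + 1 + 1 := by
        push_cast [hm]; ring
      rw [show K + (n + 1) = m + 1 from by omega, heq]
      exact this
  refine ⟨M + ∑ j ∈ Finset.range K, (j : ℝ) * z j, fun k => ?_⟩
  have hsum0 : (0:ℝ) ≤ ∑ j ∈ Finset.range K, (j : ℝ) * z j :=
    Finset.sum_nonneg fun j _ => mul_nonneg (Nat.cast_nonneg j) (hz j)
  by_cases hk : K ≤ k
  · obtain ⟨n, rfl⟩ := Nat.exists_eq_add_of_le hk
    have h := hind n
    have hk1 : (0:ℝ) < (K : ℝ) + n + 1 := by positivity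
    have : ((K + n : ℕ) : ℝ) * z (K + n) ≤ ((K : ℝ) + n) * (M / ((K : ℝ) + n + 1)) := by
      push_cast
      exact mul_le_mul_of_nonneg_left h (by positivity)
    refine le_trans this (le_trans ?_ (le_add_of_nonneg_right hsum0))
    rw [← mul_div_assoc, div_le_iff₀ hk1]
    nlinarith [hM0]
  · push_neg at hk
    have hmem : k ∈ Finset.range K := Finset.mem_range.2 hk
    have := Finset.single_le_sum (f := fun j : ℕ => (j : ℝ) * z j)
      (fun j _ => mul_nonneg (Nat.cast_nonneg j) (hz j)) hmem
    have h2 : (k : ℝ) * z k ≤ ∑ j ∈ Finset.range K, (j : ℝ) * z j := by simpa using this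
    linarith
end

section
/- (Contraction bound on the iteration matrix) Let 𝓛 be a symmetric positive semidefinite N×N real matrix, and let H be a symmetric N×N real matrix with μI ⪯ H ⪯ LI for constants 0 < μ ≤ L. Let α, β ≥ 0 satisfy αμ ≤ 1 and β‖𝓛‖ + α(L + μ) ≤ 2. Then the spectral norm satisfies ‖I − β𝓛 − αH‖ ≤ 1 − μα. -/
/-!
For a symmetric operator the norm is the supremum of `|⟪x, M x⟫| / ‖x‖²`, so it suffices to trap
the quadratic form of `M = 1 - β𝓛 - αH` between `±(1 - μα)‖x‖²`. The upper bound comes from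
`𝓛 ⪰ 0` and `H ⪰ μ`; the lower bound from `𝓛 ⪯ ‖𝓛‖`, `H ⪯ L` and `β‖𝓛‖ + αL ≤ 2 - αμ`.
-/

open scoped Matrix RealInnerProductSpace

namespace ContinuousLinearMap

variable {E : Type*} [NormedAddCommGroup E] [InnerProductSpace ℝ E]

theorem norm_le_of_abs_inner_self_le {T : E →L[ℝ] E} (hT : (T : E →ₗ[ℝ] E).IsSymmetric) {c : ℝ}
    (hc : 0 ≤ c) (h : ∀ x, |⟪x, T x⟫| ≤ c * ‖x‖ ^ 2) : ‖T‖ ≤ c := by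
  rw [T.norm_eq_iSup_rayleighQuotient hT]
  refine ciSup_le fun x ↦ ?_
  rcases eq_or_ne x 0 with rfl | hx
  · simpa using hc
  rw [rayleighQuotient, reApplyInnerSelf_apply, abs_div, abs_sq, RCLike.re_to_real,
    real_inner_comm, div_le_iff₀ (by positivity)]
  exact h x

theorem inner_self_le_norm_mul_sq (T : E →L[ℝ] E) (x : E) : ⟪x, T x⟫ ≤ ‖T‖ * ‖x‖ ^ 2 :=
  calc ⟪x, T x⟫ ≤ ‖x‖ * ‖T x‖ := real_inner_le_norm _ _
    _ ≤ ‖x‖ * (‖T‖ * ‖x‖) := by gcongr; exact T.le_opNorm x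
    _ = ‖T‖ * ‖x‖ ^ 2 := by ring

theorem norm_one_sub_smul_sub_smul_le {A B : E →L[ℝ] E} (hA : (A : E →ₗ[ℝ] E).IsSymmetric)
    (hB : (B : E →ₗ[ℝ] E).IsSymmetric) (hA_nonneg : ∀ x, 0 ≤ ⟪x, A x⟫) {μ L : ℝ}
    (hB_bounds : ∀ x, μ * ‖x‖ ^ 2 ≤ ⟪x, B x⟫ ∧ ⟪x, B x⟫ ≤ L * ‖x‖ ^ 2)
    {α β : ℝ} (hα : 0 ≤ α) (hβ : 0 ≤ β) (hαμ : α * μ ≤ 1) (hsum : β * ‖A‖ + α * (L + μ) ≤ 2) :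
    ‖1 - β • A - α • B‖ ≤ 1 - μ * α := by
  have hsymm : ((1 - β • A - α • B : E →L[ℝ] E) : E →ₗ[ℝ] E).IsSymmetric := by
    rw [toLinearMap_sub, toLinearMap_sub, toLinearMap_one, toLinearMap_smul, toLinearMap_smul]
    exact (LinearMap.IsSymmetric.one.sub (hA.smul rfl)).sub (hB.smul rfl)
  refine norm_le_of_abs_inner_self_le hsymm (by linarith) fun x ↦ ?_
  have hquad : ⟪x, (1 - β • A - α • B) x⟫ = ‖x‖ ^ 2 - β * ⟪x, A x⟫ - α * ⟪x, B x⟫ := by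
    simp only [sub_apply, smul_apply, one_apply_eq_self, inner_sub_right, real_inner_smul_right,
      real_inner_self_eq_norm_sq]
  obtain ⟨hB_lower, hB_upper⟩ := hB_bounds x
  rw [hquad, abs_le]
  constructor
  · linarith [mul_le_mul_of_nonneg_left (A.inner_self_le_norm_mul_sq x) hβ,
      mul_le_mul_of_nonneg_left hB_upper hα, mul_le_mul_of_nonneg_right hsum (sq_nonneg ‖x‖)]
  · linarith [mul_le_mul_of_nonneg_left hB_lower hα, mul_nonneg hβ (hA_nonneg x)]

end ContinuousLinearMap

theorem Matrix.IsSymm.isSymmetric_toEuclideanCLM {n : Type*} [Fintype n] [DecidableEq n]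
    {A : Matrix n n ℝ} (hA : A.IsSymm) :
    (Matrix.toEuclideanCLM (𝕜 := ℝ) (n := n) A :
      EuclideanSpace ℝ n →ₗ[ℝ] EuclideanSpace ℝ n).IsSymmetric := by
  rw [Matrix.coe_toEuclideanCLM_eq_toEuclideanLin, Matrix.isSymmetric_toEuclideanLin_iff]
  exact Matrix.isHermitian_iff_isSymm.mpr hA

theorem iteration_matrix_contraction_general
    (N : ℕ) (𝓛 H : Matrix (Fin N) (Fin N) ℝ)
    (h𝓛sym : 𝓛.IsSymm) (hHsym : H.IsSymm)
    (h𝓛psd : ∀ u : Fin N → ℝ, 0 ≤ u ⬝ᵥ (𝓛 *ᵥ u))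
    (μ L : ℝ)
    (hH : ∀ u : Fin N → ℝ, μ * (∑ i, u i ^ 2) ≤ u ⬝ᵥ (H *ᵥ u) ∧
      u ⬝ᵥ (H *ᵥ u) ≤ L * (∑ i, u i ^ 2))
    (α β : ℝ) (hα : 0 ≤ α) (hβ : 0 ≤ β) (hαμ : α * μ ≤ 1)
    (hsum : β * ‖Matrix.toEuclideanCLM (𝕜 := ℝ) (n := Fin N) 𝓛‖ + α * (L + μ) ≤ 2) :
    ‖Matrix.toEuclideanCLM (𝕜 := ℝ) (n := Fin N) (1 - β • 𝓛 - α • H)‖ ≤ 1 - μ * α := by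
  rw [map_sub, map_sub, map_one, map_smul, map_smul]
  refine ContinuousLinearMap.norm_one_sub_smul_sub_smul_le
    (Matrix.IsSymm.isSymmetric_toEuclideanCLM h𝓛sym)
    (Matrix.IsSymm.isSymmetric_toEuclideanCLM hHsym)
    (fun x ↦ ?_) (fun x ↦ ?_) hα hβ hαμ hsum
  · rw [Matrix.inner_toEuclideanCLM]
    exact h𝓛psd x
  · rw [Matrix.inner_toEuclideanCLM, EuclideanSpace.real_norm_sq_eq]
    exact hH x

/-- Contraction bound on the iteration matrix: if `𝓛 ⪰ 0` is symmetric, `μI ⪯ H ⪯ LI`,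
`α, β ≥ 0`, `αμ ≤ 1`, and `β‖𝓛‖ + α(L + μ) ≤ 2`, then the spectral norm satisfies
`‖I − β𝓛 − αH‖ ≤ 1 − μα`. -/
theorem iteration_matrix_contraction
    (N : ℕ) (𝓛 H : Matrix (Fin N) (Fin N) ℝ)
    (h𝓛sym : 𝓛.IsSymm) (hHsym : H.IsSymm)
    (h𝓛psd : ∀ u : Fin N → ℝ, 0 ≤ u ⬝ᵥ (𝓛 *ᵥ u))
    (μ L : ℝ) (hμ : 0 < μ) (hμL : μ ≤ L)
    (hH : ∀ u : Fin N → ℝ, μ * (∑ i, u i ^ 2) ≤ u ⬝ᵥ (H *ᵥ u) ∧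
      u ⬝ᵥ (H *ᵥ u) ≤ L * (∑ i, u i ^ 2))
    (α β : ℝ) (hα : 0 ≤ α) (hβ : 0 ≤ β) (hαμ : α * μ ≤ 1)
    (hsum : β * ‖Matrix.toEuclideanCLM (𝕜 := ℝ) (n := Fin N) 𝓛‖ + α * (L + μ) ≤ 2) :
    ‖Matrix.toEuclideanCLM (𝕜 := ℝ) (n := Fin N) (1 - β • 𝓛 - α • H)‖ ≤ 1 - μ * α :=
  iteration_matrix_contraction_general N 𝓛 H h𝓛sym hHsym h𝓛psd μ L hH α β hα hβ hαμ hsum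
end

section
/- (Squaring a contraction recursion) Let (ζ_k) and (ξ_k) be nonnegative real sequences, and let α_k = α_0/(k+1) with α_0 > 0, μ > 0, B ≥ 0. Suppose that for all k, ξ_k ≤ (1 − μα_k) ζ_k + α_k B and μ α_k ≤ 1. Then for any c_0 with 0 < c_0 < α_0 μ there exist constants c_1, c_2 > 0 such that for all k: ξ_k² ≤ (1 − c_1/(k+1)) ζ_k² + (c_2/(k+1)) B². -/
set_option maxHeartbeats 1000000


/-- Squaring a contraction recursion: if `ξ_k ≤ (1 − μα_k)ζ_k + α_k B` with
`α_k = α₀/(k+1)`, `μα_k ≤ 1`, then for any `0 < c₀ < α₀μ` there are `c₁, c₂ > 0` with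
`ξ_k² ≤ (1 − c₁/(k+1))ζ_k² + (c₂/(k+1))B²` for all `k`. -/
theorem squared_contraction_recursion
    (ζ ξ : ℕ → ℝ) (hζ : ∀ k, 0 ≤ ζ k) (hξ : ∀ k, 0 ≤ ξ k)
    (α0 μ B : ℝ) (hα0 : 0 < α0) (hμ : 0 < μ) (hB : 0 ≤ B)
    (hrec : ∀ k : ℕ, ξ k ≤ (1 - μ * (α0 / ((k : ℝ) + 1))) * ζ k + (α0 / ((k : ℝ) + 1)) * B)
    (hμα : ∀ k : ℕ, μ * (α0 / ((k : ℝ) + 1)) ≤ 1) :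
    ∀ c0 : ℝ, 0 < c0 → c0 < α0 * μ →
      ∃ c1 c2 : ℝ, 0 < c1 ∧ 0 < c2 ∧ ∀ k : ℕ,
        ξ k ^ 2 ≤ (1 - c1 / ((k : ℝ) + 1)) * ζ k ^ 2 + (c2 / ((k : ℝ) + 1)) * B ^ 2 := by
  intro c0 hc0 hc0'
  refine ⟨α0 * μ - c0, α0 ^ 2 * (1 + 1 / c0), by linarith, by positivity, fun k => ?_⟩
  obtain ⟨t, ht_def⟩ : ∃ t : ℝ, t = (k : ℝ) + 1 := ⟨_, rfl⟩
  have hrk := hrec k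
  have hμαk := hμα k
  rw [← ht_def] at hrk hμαk ⊢
  have ht1 : (1 : ℝ) ≤ t := by
    rw [ht_def]; have : (0 : ℝ) ≤ (k : ℝ) := Nat.cast_nonneg k; linarith
  have ht : 0 < t := by linarith
  obtain ⟨θ, hθd⟩ : ∃ x : ℝ, x = c0 / t := ⟨_, rfl⟩
  obtain ⟨v, hvd⟩ : ∃ x : ℝ, x = t / c0 := ⟨_, rfl⟩
  obtain ⟨r, hrd⟩ : ∃ x : ℝ, x = α0 / t := ⟨_, rfl⟩
  obtain ⟨s, hsd⟩ : ∃ x : ℝ, x = μ * (α0 / t) := ⟨_, rfl⟩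
  rw [← hsd, ← hrd] at hrk
  rw [← hsd] at hμαk
  have hθpos : 0 < θ := by rw [hθd]; positivity
  have hvpos : 0 < v := by rw [hvd]; positivity
  have hrpos : 0 < r := by rw [hrd]; positivity
  have hθv : θ * v = 1 := by rw [hθd, hvd]; field_simp
  have hspos : 0 ≤ s := by rw [hsd]; positivity
  obtain ⟨a, had⟩ : ∃ x : ℝ, x = (1 - s) * ζ k := ⟨_, rfl⟩
  obtain ⟨b, hbd⟩ : ∃ x : ℝ, x = r * B := ⟨_, rfl⟩
  have ha : 0 ≤ a := by rw [had]; exact mul_nonneg (by linarith) (hζ k)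
  have hb : 0 ≤ b := by rw [hbd]; exact mul_nonneg hrpos.le hB
  have hab : ξ k ≤ a + b := by rw [had, hbd]; exact hrk
  -- step 1: square the recursion
  have h1 : ξ k ^ 2 ≤ (a + b) ^ 2 := by nlinarith [hξ k]
  -- step 2: (a+b)² ≤ (1+θ)a² + (1+v)b²
  have e1a : v * θ ^ 2 * a ^ 2 = θ * a ^ 2 := by linear_combination θ * a ^ 2 * hθv
  have e2 : v * θ * (a * b) = a * b := by linear_combination a * b * hθv
  have h2 : (a + b) ^ 2 ≤ (1 + θ) * a ^ 2 + (1 + v) * b ^ 2 := by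
    nlinarith [mul_nonneg hvpos.le (sq_nonneg (θ * a - b)), e1a, e2]
  -- step 3: first term
  have hc1eq : (α0 * μ - c0) / t = s - θ := by rw [hsd, hθd]; ring
  have key : (1 + θ) * (1 - s) ^ 2 ≤ 1 - s + θ := by
    nlinarith [mul_nonneg hspos (sub_nonneg.2 hμαk),
      mul_nonneg hθpos.le (mul_nonneg hspos (sub_nonneg.2 hμαk)),
      mul_nonneg hθpos.le hspos]
  have hA : (1 + θ) * a ^ 2 ≤ (1 - (α0 * μ - c0) / t) * ζ k ^ 2 := by
    rw [hc1eq]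
    calc (1 + θ) * a ^ 2 = (1 + θ) * (1 - s) ^ 2 * ζ k ^ 2 := by rw [had]; ring
      _ ≤ (1 - s + θ) * ζ k ^ 2 := mul_le_mul_of_nonneg_right key (sq_nonneg _)
      _ = (1 - (s - θ)) * ζ k ^ 2 := by ring
  -- step 4: second term
  have e3 : v * r ^ 2 = α0 ^ 2 / (c0 * t) := by rw [hvd, hrd]; field_simp
  have htt : t ≤ t ^ 2 := by rw [sq]; exact le_mul_of_one_le_left ht.le ht1
  have hr2 : r ^ 2 ≤ α0 ^ 2 / t := by
    rw [hrd, div_pow]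
    exact div_le_div_of_nonneg_left (sq_nonneg α0) ht htt
  have hc2eq : α0 ^ 2 * (1 + 1 / c0) / t = α0 ^ 2 / t + α0 ^ 2 / (c0 * t) := by
    field_simp
  have hBnd : (1 + v) * b ^ 2 ≤ (α0 ^ 2 * (1 + 1 / c0) / t) * B ^ 2 := by
    rw [hc2eq]
    have e3' : v * r ^ 2 * B ^ 2 = α0 ^ 2 / (c0 * t) * B ^ 2 := by rw [e3]
    have hr2' : r ^ 2 * B ^ 2 ≤ α0 ^ 2 / t * B ^ 2 :=
      mul_le_mul_of_nonneg_right hr2 (sq_nonneg B)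
    calc (1 + v) * b ^ 2 = r ^ 2 * B ^ 2 + v * r ^ 2 * B ^ 2 := by rw [hbd]; ring
      _ ≤ α0 ^ 2 / t * B ^ 2 + α0 ^ 2 / (c0 * t) * B ^ 2 := add_le_add hr2' (le_of_eq e3')
      _ = (α0 ^ 2 / t + α0 ^ 2 / (c0 * t)) * B ^ 2 := by ring
  linarith [h1, h2, hA, hBnd]
end
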